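/- The Heawood graph defined as the Fano incidence graph is isomorphic to the graph given by LCF notation (5, -5)⁷: the graph on vertex set ZMod 14 whose edges are the Hamiltonian cycle edges {i, i+1} for all i : ZMod 14 together with the chords {i, i+5} for all even i. -/

import Mathlib

/-- The Heawood graph as the bipartite incidence graph of the Fano plane. -/
def heawoodGraph : SimpleGraph (ZMod 7 ⊕ ZMod 7) :=
  SimpleGraph.fromRel (fun u v => ∃ i j : ZMod 7,
    u = Sum.inl i ∧ v = Sum.inr j ∧ (j - i = 1 ∨ j - i = 2 ∨ j - i = 4))

/-- The LCF graph `(5, -5)⁷` on `ZMod 14`: Hamiltonian cycle edges `{i, i+1}` for all `i`,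
together with chords `{i, i+5}` for all `i` with even standard representative. -/
def lcfHeawood : SimpleGraph (ZMod 14) :=
  SimpleGraph.fromRel (fun u v => v = u + 1 ∨ (Even u.val ∧ v = u + 5))

/-!
The even vertex `2i` of the LCF graph is adjacent to the odd vertices `2i - 1`, `2i + 1`, `2i + 5`
and to nothing else. Labelling `2i` as the point `i` and `2j - 3` as the line `j`, the offsets
`{-1, 1, 5}` become `{2, 4, 8} - 3`, and `{2, 4, 8}` is twice the Fano difference set `{1, 2, 4}`.
-/

open SimpleGraph Sum

def fanoDifferenceSet : Finset (ZMod 7) := {1, 2, 4}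

def lcfOffsets : Finset (ZMod 14) := {-1, 1, 5}

@[simp]
lemma heawoodGraph_adj_inl_inr {i j : ZMod 7} :
    heawoodGraph.Adj (inl i) (inr j) ↔ j - i ∈ fanoDifferenceSet := by
  simp [heawoodGraph, fanoDifferenceSet]

@[simp]
lemma heawoodGraph_adj_inr_inl {i j : ZMod 7} :
    heawoodGraph.Adj (inr j) (inl i) ↔ j - i ∈ fanoDifferenceSet := by
  rw [adj_comm, heawoodGraph_adj_inl_inr]

@[simp]
lemma heawoodGraph_not_adj_inl_inl {i i' : ZMod 7} : ¬heawoodGraph.Adj (inl i) (inl i') := by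
  simp [heawoodGraph]

@[simp]
lemma heawoodGraph_not_adj_inr_inr {j j' : ZMod 7} : ¬heawoodGraph.Adj (inr j) (inr j') := by
  simp [heawoodGraph]

lemma lcfHeawood_adj_iff {u v : ZMod 14} :
    lcfHeawood.Adj u v ↔
      (Even u.val ∧ ¬Even v.val ∧ v - u ∈ lcfOffsets) ∨
        (Even v.val ∧ ¬Even u.val ∧ u - v ∈ lcfOffsets) := by
  simp only [lcfHeawood, fromRel_adj, lcfOffsets]
  revert u v
  decide

def fanoPoint (i : ZMod 7) : ZMod 14 := 2 * i.val

def fanoLine (j : ZMod 7) : ZMod 14 := 2 * j.val - 3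

@[simp]
lemma even_val_fanoPoint (i : ZMod 7) : Even (fanoPoint i).val := by
  revert i; decide

@[simp]
lemma not_even_val_fanoLine (j : ZMod 7) : ¬Even (fanoLine j).val := by
  revert j; decide

lemma fanoPoint_injective : Function.Injective fanoPoint := by
  decide

lemma fanoLine_injective : Function.Injective fanoLine := by
  decide

@[simp]
lemma fanoLine_sub_fanoPoint_mem_lcfOffsets {i j : ZMod 7} :
    fanoLine j - fanoPoint i ∈ lcfOffsets ↔ j - i ∈ fanoDifferenceSet := by
  revert i j; decide

lemma fanoPoint_ne_fanoLine (i j : ZMod 7) : fanoPoint i ≠ fanoLine j :=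
  fun h => not_even_val_fanoLine j (h ▸ even_val_fanoPoint i)

noncomputable def heawoodEquiv : ZMod 7 ⊕ ZMod 7 ≃ ZMod 14 :=
  Equiv.ofBijective (Sum.elim fanoPoint fanoLine) <|
    (Fintype.bijective_iff_injective_and_card _).mpr
      ⟨fanoPoint_injective.sumElim fanoLine_injective fanoPoint_ne_fanoLine, rfl⟩

/-- The Fano incidence graph is isomorphic to the LCF graph `(5, -5)⁷`. -/
theorem heawood_iso_lcf : Nonempty (heawoodGraph ≃g lcfHeawood) := by
  refine ⟨⟨heawoodEquiv, fun {a b} => ?_⟩⟩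
  rcases a with i | j <;> rcases b with i' | j' <;>
    simp [heawoodEquiv, lcfHeawood_adj_iff]
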